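/- A deterministic program P : Hty × Lty → Lty' satisfies noninterference (i.e., P(h₁,l) = P(h₂,l) for all h₁,h₂,l) if and only if for every finitely supported joint input distribution (H,L), the leakage H(P(H,L) | L) = 0. -/

import Mathlib

open Finset Real

/-- Probability mass of the event `X = x` under distribution `p` on a finite sample space. -/
noncomputable def mass {Ω α : Type*} [Fintype Ω] [DecidableEq α]
    (p : Ω → ℝ) (X : Ω → α) (x : α) : ℝ :=
  ∑ ω ∈ Finset.univ.filter (fun ω => X ω = x), p ω

/-- Shannon entropy of a finitely supported random variable (convention `0 * log 0 = 0`
since `Real.log 0 = 0`). -/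
noncomputable def entropy {Ω α : Type*} [Fintype Ω] [Fintype α] [DecidableEq α]
    (p : Ω → ℝ) (X : Ω → α) : ℝ :=
  -∑ x, mass p X x * Real.log (mass p X x)

/-- Conditional Shannon entropy `H(X | L) = ∑ l p(l) H(X | L = l)`, written via the joint mass. -/
noncomputable def condEntropy {Ω α β : Type*} [Fintype Ω] [Fintype α] [Fintype β]
    [DecidableEq α] [DecidableEq β] (p : Ω → ℝ) (X : Ω → α) (L : Ω → β) : ℝ :=
  -∑ l, ∑ x, mass p (fun ω => (X ω, L ω)) (x, l) *
      Real.log (mass p (fun ω => (X ω, L ω)) (x, l) / mass p L l)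


/-!
Each term `m(x,l) * log (m(x,l) / m(l))` of the conditional entropy is nonpositive, since a cell
`{X = x, L = l}` has at most the mass of its fibre `{L = l}`; so the conditional entropy vanishes
iff every cell carries either none or all of the mass of its fibre. If `P` ignores the high input,
each fibre of the low input lies in a single cell. If `P (h₁, l) ≠ P (h₂, l)`, the uniform
distribution on `(h₁, l)` and `(h₂, l)` splits the fibre of `l` into two cells of mass `1/2`.
-/

lemma mul_log_div_nonpos {a b : ℝ} (ha : 0 ≤ a) (hab : a ≤ b) : a * log (a / b) ≤ 0 :=
  have hb : 0 ≤ b := ha.trans hab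
  mul_nonpos_of_nonneg_of_nonpos ha (log_nonpos (div_nonneg ha hb) (div_le_one_of_le₀ hab hb))

lemma mul_log_div_eq_zero_iff {a b : ℝ} (ha : 0 ≤ a) (hab : a ≤ b) :
    a * log (a / b) = 0 ↔ a = 0 ∨ a = b := by
  rcases (ha.trans hab).eq_or_lt with hb | hb
  · subst hb
    simp [le_antisymm hab ha]
  have hdiv : 0 ≤ a / b := div_nonneg ha hb.le
  rw [mul_eq_zero, log_eq_zero, div_eq_zero_iff, div_eq_one_iff_eq hb.ne']
  constructor
  · rintro (h | (h | h) | h | h) <;> first | exact Or.inl h | exact Or.inr h | linarith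
  · rintro (h | h)
    · exact Or.inl h
    · exact Or.inr (Or.inr (Or.inl h))

section

variable {Ω α β : Type*} [Fintype Ω] [DecidableEq α] [DecidableEq β] {p : Ω → ℝ}

lemma mass_nonneg (hp : ∀ ω, 0 ≤ p ω) (X : Ω → α) (x : α) : 0 ≤ mass p X x :=
  sum_nonneg fun ω _ => hp ω

lemma mass_pair_le_mass (hp : ∀ ω, 0 ≤ p ω) (X : Ω → α) (L : Ω → β) (x : α) (l : β) :
    mass p (fun ω => (X ω, L ω)) (x, l) ≤ mass p L l := by
  refine sum_le_sum_of_subset_of_nonneg (fun ω => ?_) fun ω _ _ => hp ω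
  simp +contextual [mem_filter]

lemma mass_add (p p' : Ω → ℝ) (X : Ω → α) (x : α) :
    mass (p + p') X x = mass p X x + mass p' X x :=
  sum_add_distrib

lemma mass_single [DecidableEq Ω] (a : Ω) (c : ℝ) (X : Ω → α) (x : α) :
    mass (Pi.single a c) X x = if X a = x then c else 0 := by
  simp only [mass, sum_pi_single', mem_filter, mem_univ, true_and]

lemma mass_pair_eq_zero_or_eq_mass {X : Ω → α} {L : Ω → β}
    (hX : ∀ ω ω', L ω = L ω' → X ω = X ω') (x : α) (l : β) :
    mass p (fun ω => (X ω, L ω)) (x, l) = 0 ∨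
      mass p (fun ω => (X ω, L ω)) (x, l) = mass p L l := by
  by_cases hcell : ∃ ω₀, X ω₀ = x ∧ L ω₀ = l
  · obtain ⟨ω₀, rfl, rfl⟩ := hcell
    refine Or.inr (sum_congr (filter_congr fun ω _ => ?_) fun _ _ => rfl)
    simpa using fun h => hX ω ω₀ h
  · refine Or.inl (sum_eq_zero fun ω hω => absurd ⟨ω, ?_⟩ hcell)
    simpa using hω

variable [Fintype α] [Fintype β]

theorem condEntropy_eq_zero_iff (hp : ∀ ω, 0 ≤ p ω) (X : Ω → α) (L : Ω → β) :
    condEntropy p X L = 0 ↔ ∀ l x, mass p (fun ω => (X ω, L ω)) (x, l) = 0 ∨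
      mass p (fun ω => (X ω, L ω)) (x, l) = mass p L l := by
  have hterm := fun l x =>
    mul_log_div_nonpos (mass_nonneg hp _ (x, l)) (mass_pair_le_mass hp X L x l)
  rw [condEntropy, neg_eq_zero,
    sum_eq_zero_iff_of_nonpos fun l _ => sum_nonpos fun x _ => hterm l x]
  simp only [mem_univ, forall_true_left, sum_eq_zero_iff_of_nonpos fun x _ => hterm _ x]
  simp only [mul_log_div_eq_zero_iff (mass_nonneg hp _ _) (mass_pair_le_mass hp X L _ _)]

theorem exists_condEntropy_ne_zero {X : Ω → α} {L : Ω → β} {a b : Ω}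
    (hL : L a = L b) (hX : X a ≠ X b) :
    ∃ q : Ω → ℝ, (∀ ω, 0 ≤ q ω) ∧ ∑ ω, q ω = 1 ∧ condEntropy q X L ≠ 0 := by
  classical
  set q : Ω → ℝ := Pi.single a (1 / 2) + Pi.single b (1 / 2)
  have hq : ∀ ω, 0 ≤ q ω := fun ω => by
    simp only [q, Pi.add_apply, Pi.single_apply]
    split_ifs <;> norm_num
  refine ⟨q, hq, ?_, fun h => ?_⟩
  · simp only [q, Pi.add_apply, sum_add_distrib, sum_pi_single', mem_univ, if_true]
    norm_num
  have hcell : mass q (fun ω => (X ω, L ω)) (X a, L a) = 1 / 2 := by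
    simp [q, mass_add, mass_single, hX.symm]
  have hfibre : mass q L (L a) = 1 := by
    simp only [q, mass_add, mass_single, hL, if_true]
    norm_num
  rcases (condEntropy_eq_zero_iff hq X L).1 h (L a) (X a) with h' | h' <;>
    norm_num [hcell, hfibre] at h'

end

theorem noninterference_iff_zero_leakage_general {Hty Lty Lty' : Type*}
    [Fintype Hty] [Fintype Lty] [Fintype Lty']
    [DecidableEq Lty] [DecidableEq Lty']
    (P : Hty × Lty → Lty') :
    (∀ h₁ h₂ : Hty, ∀ l : Lty, P (h₁, l) = P (h₂, l)) ↔
      (∀ q : Hty × Lty → ℝ, (∀ x, 0 ≤ q x) → ∑ x, q x = 1 →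
        condEntropy q (fun x => P x) Prod.snd = 0) := by
  constructor
  · intro hNI q hq _
    rw [condEntropy_eq_zero_iff hq]
    exact fun l x => mass_pair_eq_zero_or_eq_mass (L := Prod.snd)
      (fun ⟨h, _⟩ ⟨h', _⟩ hl => by cases hl; exact hNI h h' _) x l
  · intro hleak h₁ h₂ l
    by_contra hne
    obtain ⟨q, hq, hsum, hq0⟩ :=
      exists_condEntropy_ne_zero (L := Prod.snd) (a := (h₁, l)) (b := (h₂, l)) rfl hne
    exact hq0 (hleak q hq hsum)

/-- Noninterference iff zero leakage for every finitely supported joint input distribution. -/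
theorem noninterference_iff_zero_leakage {Hty Lty Lty' : Type*}
    [Fintype Hty] [Fintype Lty] [Fintype Lty']
    [Nonempty Hty] [Nonempty Lty]
    [DecidableEq Hty] [DecidableEq Lty] [DecidableEq Lty']
    (P : Hty × Lty → Lty') :
    (∀ h₁ h₂ : Hty, ∀ l : Lty, P (h₁, l) = P (h₂, l)) ↔
      (∀ q : Hty × Lty → ℝ, (∀ x, 0 ≤ q x) → ∑ x, q x = 1 →
        condEntropy q (fun x => P x) Prod.snd = 0) :=
  noninterference_iff_zero_leakage_general P
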